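/- arXiv:1811.11265 — 4 statements merged into one kernel-verified Lean document; each statement's English description precedes it below -/
import Mathlib

section
/- Suppose V(t,x,p) = x·p + v0(t) + x·v1(t) + x²·v2(t), where v0, v1, v2 are differentiable on [0,T] and satisfy: v2' + (1/κ)v2² - φ = 0, v1' + (1/κ)v2·v1 + Ī(t) = 0, v0' + (1/(4κ))v1² = 0, with v0(T) = 0, v1(T) = 0, v2(T) = -ϱ. Then V satisfies the HJB equation ∂_t V + Ī(t)·∂_p V + (σ_P²/2)·∂_pp V - φx² + sup_{r∈ℝ} { -r·∂_x V + p·r - κ·r² } = 0 for all (t,x,p) ∈ [0,T)×ℝ×ℝ, with terminal condition V(T,x,p) = x(p - ϱx). -/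
/-!
For the quadratic ansatz, `∂_p V = x`, `∂_pp V = 0` and `∂_x V = p + v₁ + 2 x v₂`, so the
supremum equals `(v₁ + 2 x v₂)² / (4κ)`. The HJB residual is then
`(v₀' + v₁²/(4κ)) + x (v₁' + v₂ v₁/κ + Ī) + x² (v₂' + v₂²/κ - φ)`, which vanishes by the
ODE system, coefficient by coefficient.
-/

open Set

theorem sSup_range_neg_mul_add_mul_sub_mul_sq {κ : ℝ} (hκ : 0 < κ) (a p : ℝ) :
    sSup (range fun r : ℝ => -r * a + p * r - κ * r ^ 2) = (p - a) ^ 2 / (4 * κ) := by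
  refine IsGreatest.csSup_eq ⟨⟨(p - a) / (2 * κ), by field_simp; ring⟩, ?_⟩
  rintro _ ⟨r, rfl⟩
  rw [le_div_iff₀ (by positivity)]
  nlinarith [sq_nonneg (p - a - 2 * κ * r)]

section QuadraticAnsatz

variable {v0 v1 v2 : ℝ → ℝ}

theorem hasDerivAt_quadratic_ansatz_time {d0 d1 d2 t : ℝ} (x p : ℝ)
    (h0 : HasDerivAt v0 d0 t) (h1 : HasDerivAt v1 d1 t) (h2 : HasDerivAt v2 d2 t) :
    HasDerivAt (fun τ => x * p + v0 τ + x * v1 τ + x ^ 2 * v2 τ)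
      (d0 + x * d1 + x ^ 2 * d2) t :=
  ((h0.const_add (x * p)).add (h1.const_mul x)).add (h2.const_mul (x ^ 2))

theorem deriv_quadratic_ansatz_price (t x : ℝ) :
    deriv (fun q => x * q + v0 t + x * v1 t + x ^ 2 * v2 t) = fun _ => x := by
  funext q
  simp only [add_assoc]
  exact ((hasDerivAt_id' q).const_mul x |>.congr_deriv (mul_one x)).add_const _ |>.deriv

theorem hasDerivAt_quadratic_ansatz_inventory (t x p : ℝ) :
    HasDerivAt (fun y => y * p + v0 t + y * v1 t + y ^ 2 * v2 t)
      (p + v1 t + 2 * x * v2 t) x := by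
  refine (((((hasDerivAt_id' x).mul_const p).add_const (v0 t)).add
    ((hasDerivAt_id' x).mul_const (v1 t))).add
      ((hasDerivAt_pow 2 x).mul_const (v2 t))).congr_deriv ?_
  push_cast
  ring

end QuadraticAnsatz

theorem stmt4_general (κ φ σP ϱ T : ℝ) (hκ : 0 < κ)
    (Ibar : ℝ → ℝ)
    (v0 v1 v2 v0' v1' v2' : ℝ → ℝ)
    (hv0 : ∀ t ∈ Set.Icc (0:ℝ) T, HasDerivAt v0 (v0' t) t)
    (hv1 : ∀ t ∈ Set.Icc (0:ℝ) T, HasDerivAt v1 (v1' t) t)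
    (hv2 : ∀ t ∈ Set.Icc (0:ℝ) T, HasDerivAt v2 (v2' t) t)
    (hR : ∀ t ∈ Set.Icc (0:ℝ) T, v2' t + (1 / κ) * (v2 t) ^ 2 - φ = 0)
    (hL : ∀ t ∈ Set.Icc (0:ℝ) T, v1' t + (1 / κ) * v2 t * v1 t + Ibar t = 0)
    (h0 : ∀ t ∈ Set.Icc (0:ℝ) T, v0' t + (1 / (4 * κ)) * (v1 t) ^ 2 = 0)
    (hT0 : v0 T = 0) (hT1 : v1 T = 0) (hT2 : v2 T = -ϱ)
    (V : ℝ → ℝ → ℝ → ℝ)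
    (hV : ∀ t x p, V t x p = x * p + v0 t + x * v1 t + x ^ 2 * v2 t) :
    (∀ t ∈ Set.Ico (0:ℝ) T, ∀ x p : ℝ,
      deriv (fun τ => V τ x p) t
        + Ibar t * deriv (fun q => V t x q) p
        + (σP ^ 2 / 2) * deriv (deriv (fun q => V t x q)) p
        - φ * x ^ 2
        + sSup (Set.range fun r : ℝ =>
            -r * deriv (fun y => V t y p) x + p * r - κ * r ^ 2) = 0) ∧
    ∀ x p : ℝ, V T x p = x * (p - ϱ * x) := by
  obtain rfl : V = fun t x p => x * p + v0 t + x * v1 t + x ^ 2 * v2 t :=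
    funext fun t => funext fun x => funext (hV t x)
  refine ⟨fun t ht x p => ?_, fun x p => by simp only [hT0, hT1, hT2]; ring⟩
  have ht' : t ∈ Icc 0 T := Ico_subset_Icc_self ht
  rw [(hasDerivAt_quadratic_ansatz_time x p (hv0 t ht') (hv1 t ht') (hv2 t ht')).deriv,
    deriv_quadratic_ansatz_price, deriv_const, (hasDerivAt_quadratic_ansatz_inventory t x p).deriv,
    sSup_range_neg_mul_add_mul_sub_mul_sq hκ]
  linear_combination h0 t ht' + x * hL t ht' + x ^ 2 * hR t ht'

theorem stmt4 (κ φ σP ϱ T : ℝ) (hκ : 0 < κ) (hφ : 0 < φ) (hσ : 0 < σP)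
    (hϱ : 0 < ϱ) (hT : 0 < T)
    (Ibar : ℝ → ℝ) (hI : ContinuousOn Ibar (Set.Icc 0 T))
    (v0 v1 v2 v0' v1' v2' : ℝ → ℝ)
    (hv0 : ∀ t ∈ Set.Icc (0:ℝ) T, HasDerivAt v0 (v0' t) t)
    (hv1 : ∀ t ∈ Set.Icc (0:ℝ) T, HasDerivAt v1 (v1' t) t)
    (hv2 : ∀ t ∈ Set.Icc (0:ℝ) T, HasDerivAt v2 (v2' t) t)
    (hR : ∀ t ∈ Set.Icc (0:ℝ) T, v2' t + (1 / κ) * (v2 t) ^ 2 - φ = 0)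
    (hL : ∀ t ∈ Set.Icc (0:ℝ) T, v1' t + (1 / κ) * v2 t * v1 t + Ibar t = 0)
    (h0 : ∀ t ∈ Set.Icc (0:ℝ) T, v0' t + (1 / (4 * κ)) * (v1 t) ^ 2 = 0)
    (hT0 : v0 T = 0) (hT1 : v1 T = 0) (hT2 : v2 T = -ϱ)
    (V : ℝ → ℝ → ℝ → ℝ)
    (hV : ∀ t x p, V t x p = x * p + v0 t + x * v1 t + x ^ 2 * v2 t) :
    (∀ t ∈ Set.Ico (0:ℝ) T, ∀ x p : ℝ,
      deriv (fun τ => V τ x p) t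
        + Ibar t * deriv (fun q => V t x q) p
        + (σP ^ 2 / 2) * deriv (deriv (fun q => V t x q)) p
        - φ * x ^ 2
        + sSup (Set.range fun r : ℝ =>
            -r * deriv (fun y => V t y p) x + p * r - κ * r ^ 2) = 0) ∧
    ∀ x p : ℝ, V T x p = x * (p - ϱ * x) :=
  stmt4_general κ φ σP ϱ T hκ Ibar v0 v1 v2 v0' v1' v2' hv0 hv1 hv2 hR hL h0 hT0 hT1 hT2 V hV
end

section
/- Suppose r* ∈ V_S(x) satisfies the first-order condition: there exists λ ∈ ℝ such that 2κ r*_t + 2φ∫_0^t X*_s ds - ∫_0^t m(s) ds = λ for all t ∈ [0,T], where X*_t = x - ∫_0^t r*_s ds. Then r* minimizes C(r) = κ∫_0^T r_t² dt + φ∫_0^T X_t² dt - ∫_0^T(∫_0^t m(s)ds) r_t dt over V_S(x). -/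
/-!
The cost is convex in `r`: a positive combination of squares of affine functions of `r`, minus a
linear term. Hence `C(r) ≥ C(r*) + DC(r*)(r - r*)`, where, for `h = r - r*` and `H t = ∫₀ᵗ h`,
`DC(r*) h = ∫ (2κ r* - M) h - 2φ ∫ X* H` with `M t = ∫₀ᵗ m`. By the first-order condition
`2κ r* - M = λ - 2φ G` with `G t = ∫₀ᵗ X*`, so `DC(r*) h = λ H(T) - 2φ ∫ (G h + X* H)`.
The primitives `G` and `H` are absolutely continuous, and integration by parts gives
`∫ (G h + X* H) = G(T) H(T)`. Both terms vanish because the fuel constraint forces `H(T) = 0`.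
-/

open MeasureTheory

/-- The cost functional of the static optimal execution problem. -/
noncomputable def execCost (κ φ T x : ℝ) (m r : ℝ → ℝ) : ℝ :=
  κ * (∫ t in (0:ℝ)..T, (r t) ^ 2)
    + φ * (∫ t in (0:ℝ)..T, (x - ∫ s in (0:ℝ)..t, r s) ^ 2)
    - ∫ t in (0:ℝ)..T, (∫ s in (0:ℝ)..t, m s) * r t

/-- Admissible static strategies: integrable (with integrable square) and fuel constraint. -/
def execAdm (T x : ℝ) (r : ℝ → ℝ) : Prop :=
  IntervalIntegrable r volume 0 T ∧
  IntervalIntegrable (fun t => (r t) ^ 2) volume 0 T ∧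
  (∫ s in (0:ℝ)..T, r s) = x

open Set

theorem IntervalIntegrable.mul_of_sq {f g : ℝ → ℝ} {a b : ℝ}
    (hf : IntervalIntegrable f volume a b) (hf2 : IntervalIntegrable (fun t => f t ^ 2) volume a b)
    (hg : IntervalIntegrable g volume a b)
    (hg2 : IntervalIntegrable (fun t => g t ^ 2) volume a b) :
    IntervalIntegrable (fun t => f t * g t) volume a b := by
  rw [intervalIntegrable_iff] at *
  exact ((memLp_two_iff_integrable_sq hf.aestronglyMeasurable).2 hf2).integrable_mul
    ((memLp_two_iff_integrable_sq hg.aestronglyMeasurable).2 hg2)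

theorem IntervalIntegrable.continuousOn_primitive {f : ℝ → ℝ} {a b : ℝ}
    (hf : IntervalIntegrable f volume a b) :
    ContinuousOn (fun t => ∫ u in a..t, f u) (uIcc a b) :=
  intervalIntegral.continuousOn_primitive_interval' hf left_mem_uIcc

theorem IntervalIntegrable.integral_sub_of_mem_uIcc {f g : ℝ → ℝ} {a b t : ℝ}
    (hf : IntervalIntegrable f volume a b) (hg : IntervalIntegrable g volume a b)
    (ht : t ∈ uIcc a b) :
    ∫ u in a..t, (f u - g u) = (∫ u in a..t, f u) - ∫ u in a..t, g u :=
  intervalIntegral.integral_sub (hf.mono_set (uIcc_subset_uIcc_left ht))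
    (hg.mono_set (uIcc_subset_uIcc_left ht))

theorem IntervalIntegrable.integral_mul_primitive_add_primitive_mul {f g : ℝ → ℝ} {a b : ℝ}
    (hf : IntervalIntegrable f volume a b) (hg : IntervalIntegrable g volume a b) :
    ∫ x in a..b, (f x * ∫ t in a..x, g t) + (∫ t in a..x, f t) * g x
      = (∫ x in a..b, f x) * ∫ x in a..b, g x := by
  have ha : a ∈ uIcc a b := left_mem_uIcc
  have hibp := (hf.absolutelyContinuousOnInterval_intervalIntegral ha).integral_deriv_mul_eq_sub
    (hg.absolutelyContinuousOnInterval_intervalIntegral ha)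
  simp only [intervalIntegral.integral_same, mul_zero, sub_zero] at hibp
  rw [← hibp]
  refine intervalIntegral.integral_congr_ae ?_
  filter_upwards [hf.ae_hasDerivAt_integral, hg.ae_hasDerivAt_integral] with x hfx hgx hx
  have hx' : x ∈ uIcc a b := uIoc_subset_uIcc hx
  rw [(hfx hx' a ha).deriv, (hgx hx' a ha).deriv]

noncomputable def inventory (x : ℝ) (r : ℝ → ℝ) (t : ℝ) : ℝ := x - ∫ u in (0:ℝ)..t, r u

theorem continuousOn_inventory {T x : ℝ} {r : ℝ → ℝ} (hr : IntervalIntegrable r volume 0 T) :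
    ContinuousOn (inventory x r) (uIcc 0 T) :=
  continuousOn_const.sub hr.continuousOn_primitive

theorem intervalIntegrable_inventory_sq {T x : ℝ} {r : ℝ → ℝ}
    (hr : IntervalIntegrable r volume 0 T) :
    IntervalIntegrable (fun t => inventory x r t ^ 2) volume 0 T :=
  ((continuousOn_inventory hr).pow 2).intervalIntegrable

/-- The Gâteaux derivative `d/dε (execCost κ φ T x m (s + ε • h))` at `ε = 0`. -/
noncomputable def execCostDeriv (κ φ T x : ℝ) (m s h : ℝ → ℝ) : ℝ :=
  (∫ t in (0:ℝ)..T, (2 * κ * s t - ∫ u in (0:ℝ)..t, m u) * h t)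
    - 2 * φ * ∫ t in (0:ℝ)..T, inventory x s t * ∫ u in (0:ℝ)..t, h u

section
variable {κ φ T x : ℝ} {m r s : ℝ → ℝ}

theorem execCost_sub_execCost (hm : IntervalIntegrable m volume 0 T)
    (hr : IntervalIntegrable r volume 0 T) (hr2 : IntervalIntegrable (fun t => r t ^ 2) volume 0 T)
    (hs : IntervalIntegrable s volume 0 T)
    (hs2 : IntervalIntegrable (fun t => s t ^ 2) volume 0 T) :
    execCost κ φ T x m r - execCost κ φ T x m s
      = ∫ t in (0:ℝ)..T, (κ * (r t ^ 2 - s t ^ 2)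
          + φ * (inventory x r t ^ 2 - inventory x s t ^ 2)
          - (∫ u in (0:ℝ)..t, m u) * (r t - s t)) := by
  have hM := hm.continuousOn_primitive
  have hXr := intervalIntegrable_inventory_sq (x := x) hr
  have hXs := intervalIntegrable_inventory_sq (x := x) hs
  rw [intervalIntegral.integral_sub (((hr2.sub hs2).const_mul κ).add ((hXr.sub hXs).const_mul φ))
      ((hr.sub hs).continuousOn_mul hM),
    intervalIntegral.integral_add ((hr2.sub hs2).const_mul κ) ((hXr.sub hXs).const_mul φ),
    intervalIntegral.integral_const_mul, intervalIntegral.integral_const_mul,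
    intervalIntegral.integral_sub hr2 hs2, intervalIntegral.integral_sub hXr hXs]
  simp only [mul_sub]
  rw [intervalIntegral.integral_sub (hr.continuousOn_mul hM) (hs.continuousOn_mul hM)]
  unfold execCost inventory
  ring

theorem execCostDeriv_le_execCost_sub (hκ : 0 ≤ κ) (hφ : 0 ≤ φ) (hT : 0 ≤ T)
    (hm : IntervalIntegrable m volume 0 T)
    (hr : IntervalIntegrable r volume 0 T) (hr2 : IntervalIntegrable (fun t => r t ^ 2) volume 0 T)
    (hs : IntervalIntegrable s volume 0 T)
    (hs2 : IntervalIntegrable (fun t => s t ^ 2) volume 0 T) :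
    execCostDeriv κ φ T x m s (fun t => r t - s t)
      ≤ execCost κ φ T x m r - execCost κ φ T x m s := by
  have hM := hm.continuousOn_primitive
  have hH := (hr.sub hs).continuousOn_primitive
  have hsh : IntervalIntegrable (fun t => s t * (r t - s t)) volume 0 T :=
    ((hs.mul_of_sq hs2 hr hr2).sub hs2).congr_ae (Filter.Eventually.of_forall fun t => by ring)
  have hlin : IntervalIntegrable
      (fun t => (2 * κ * s t - ∫ u in (0:ℝ)..t, m u) * (r t - s t)) volume 0 T :=
    ((hsh.const_mul (2 * κ)).sub ((hr.sub hs).continuousOn_mul hM)).congr_ae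
      (Filter.Eventually.of_forall fun t => by ring)
  have hXH : IntervalIntegrable
      (fun t => inventory x s t * ∫ u in (0:ℝ)..t, (r u - s u)) volume 0 T :=
    ((continuousOn_inventory hs).mul hH).intervalIntegrable
  rw [execCost_sub_execCost hm hr hr2 hs hs2, execCostDeriv,
    ← intervalIntegral.integral_const_mul, ← intervalIntegral.integral_sub hlin (hXH.const_mul _)]
  refine intervalIntegral.integral_mono_on hT (hlin.sub (hXH.const_mul _)) ?_ fun t ht => ?_
  · have hX2 : IntervalIntegrable (fun t => inventory x r t ^ 2 - inventory x s t ^ 2) volume 0 T :=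
      (intervalIntegrable_inventory_sq hr).sub (intervalIntegrable_inventory_sq hs)
    exact (((hr2.sub hs2).const_mul κ).add (hX2.const_mul φ)).sub ((hr.sub hs).continuousOn_mul hM)
  · have hX : inventory x r t = inventory x s t - ∫ u in (0:ℝ)..t, (r u - s u) := by
      rw [inventory, inventory, hr.integral_sub_of_mem_uIcc hs (Icc_subset_uIcc ht)]
      ring
    rw [hX]
    nlinarith [mul_nonneg hκ (sq_nonneg (r t - s t)),
      mul_nonneg hφ (sq_nonneg (∫ u in (0:ℝ)..t, (r u - s u)))]

theorem execCostDeriv_eq_zero_of_foc {lam : ℝ} {h : ℝ → ℝ} (hT : 0 ≤ T)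
    (hs : IntervalIntegrable s volume 0 T) (hh : IntervalIntegrable h volume 0 T)
    (hh0 : ∫ t in (0:ℝ)..T, h t = 0)
    (hFOC : ∀ t ∈ Icc (0:ℝ) T,
      2 * κ * s t + 2 * φ * (∫ u in (0:ℝ)..t, inventory x s u) - (∫ u in (0:ℝ)..t, m u) = lam) :
    execCostDeriv κ φ T x m s h = 0 := by
  have hX : IntervalIntegrable (inventory x s) volume 0 T :=
    (continuousOn_inventory hs).intervalIntegrable
  have hGh := hh.continuousOn_mul hX.continuousOn_primitive
  have hfoc : ∫ t in (0:ℝ)..T, (2 * κ * s t - ∫ u in (0:ℝ)..t, m u) * h t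
      = ∫ t in (0:ℝ)..T, lam * h t - 2 * φ * ((∫ u in (0:ℝ)..t, inventory x s u) * h t) := by
    refine intervalIntegral.integral_congr fun t ht => ?_
    rw [← hFOC t (uIcc_of_le hT ▸ ht)]
    ring
  have hparts := hX.integral_mul_primitive_add_primitive_mul hh
  rw [intervalIntegral.integral_add (hX.mul_continuousOn hh.continuousOn_primitive) hGh, hh0,
    mul_zero] at hparts
  rw [execCostDeriv, hfoc, intervalIntegral.integral_sub (hh.const_mul lam) (hGh.const_mul _),
    intervalIntegral.integral_const_mul, intervalIntegral.integral_const_mul, hh0]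
  linear_combination (-2 * φ) * hparts

end

theorem stmt8_general (κ φ T x : ℝ) (hκ : 0 < κ) (hφ : 0 < φ) (hT : 0 < T)
    (m : ℝ → ℝ) (hm : IntervalIntegrable m volume 0 T)
    (rstar : ℝ → ℝ) (hadm : execAdm T x rstar)
    (lam : ℝ)
    (hFOC : ∀ t ∈ Set.Icc (0:ℝ) T,
      2 * κ * rstar t
        + 2 * φ * (∫ s in (0:ℝ)..t, (x - ∫ u in (0:ℝ)..s, rstar u))
        - (∫ s in (0:ℝ)..t, m s) = lam) :
    ∀ r : ℝ → ℝ, execAdm T x r → execCost κ φ T x m rstar ≤ execCost κ φ T x m r := by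
  obtain ⟨hs, hs2, hsx⟩ := hadm
  rintro r ⟨hr, hr2, hrx⟩
  have hzero : execCostDeriv κ φ T x m rstar (fun t => r t - rstar t) = 0 :=
    execCostDeriv_eq_zero_of_foc hT.le hs (hr.sub hs)
      (by rw [intervalIntegral.integral_sub hr hs, hrx, hsx, sub_self]) hFOC
  linarith [execCostDeriv_le_execCost_sub (x := x) hκ.le hφ.le hT.le hm hr hr2 hs hs2]

theorem stmt8 (κ φ T x : ℝ) (hκ : 0 < κ) (hφ : 0 < φ) (hT : 0 < T) (hx : 0 < x)
    (m : ℝ → ℝ) (hm : IntervalIntegrable m volume 0 T)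
    (rstar : ℝ → ℝ) (hadm : execAdm T x rstar)
    (lam : ℝ)
    (hFOC : ∀ t ∈ Set.Icc (0:ℝ) T,
      2 * κ * rstar t
        + 2 * φ * (∫ s in (0:ℝ)..t, (x - ∫ u in (0:ℝ)..s, rstar u))
        - (∫ s in (0:ℝ)..t, m s) = lam) :
    ∀ r : ℝ → ℝ, execAdm T x r → execCost κ φ T x m rstar ≤ execCost κ φ T x m r :=
  stmt8_general κ φ T x hκ hφ hT m hm rstar hadm lam hFOC
end

section
/- If r* ∈ V_S(x) minimizes C over V_S(x), then there exists a constant λ such that 2κ r*_t + 2φ∫_0^t X*_s ds - ∫_0^t m(s) ds = λ for almost every t ∈ [0,T]. -/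
/-!
Write `F` for the left-hand side of the Euler–Lagrange equation. For `h` with `h, h²`
integrable and `∫ h = 0`, the strategy `r* + ε h` is admissible and `C (r* + ε h)` is a
quadratic polynomial in `ε` whose linear coefficient is `∫ F h`: the `φ`-term is brought to this
form by integrating by parts between the primitives `∫₀ᵗ X*` and `∫₀ᵗ h`, whose boundary term
vanishes because `∫₀ᵀ h = 0`. Minimality at `ε = 0` gives `∫ F h = 0`. Since `F` is
square integrable, `h = F - c` with `c` the mean of `F` over `[0, T]` is allowed, and then
`∫ (F - c)² = ∫ F (F - c) = 0`, so `F = c` almost everywhere (du Bois-Reymond).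
-/

open MeasureTheory

open Set intervalIntegral
open scoped Interval

instance isFiniteMeasure_restrict_uIoc (a b : ℝ) : IsFiniteMeasure (volume.restrict (Ι a b)) :=
  Real.isFiniteMeasure_restrict_Ioc _ _

theorem memLp_two_restrict_uIoc_iff {f : ℝ → ℝ} {a b : ℝ} :
    MemLp f 2 (volume.restrict (Ι a b)) ↔
      IntervalIntegrable f volume a b ∧ IntervalIntegrable (fun t => f t ^ 2) volume a b := by
  refine ⟨fun hf => ?_, fun ⟨hf, hf2⟩ => ?_⟩
  · exact ⟨intervalIntegrable_iff.2 (hf.integrable one_le_two),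
      intervalIntegrable_iff.2 hf.integrable_sq⟩
  · exact (memLp_two_iff_integrable_sq hf.def'.aestronglyMeasurable).2 hf2.def'

theorem ContinuousOn.memLp_two_restrict_uIoc {f : ℝ → ℝ} {a b : ℝ}
    (hf : ContinuousOn f [[a, b]]) :
    MemLp f 2 (volume.restrict (Ι a b)) :=
  memLp_two_restrict_uIoc_iff.2 ⟨hf.intervalIntegrable, (hf.pow 2).intervalIntegrable⟩

theorem MeasureTheory.MemLp.intervalIntegrable_mul {f g : ℝ → ℝ} {a b : ℝ}
    (hf : MemLp f 2 (volume.restrict (Ι a b))) (hg : MemLp g 2 (volume.restrict (Ι a b))) :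
    IntervalIntegrable (fun t => f t * g t) volume a b :=
  intervalIntegrable_iff.2 (hf.integrable_mul hg)

theorem IntervalIntegrable.integral_mul_primitive_add {f g : ℝ → ℝ} {a b : ℝ}
    (hf : IntervalIntegrable f volume a b) (hg : IntervalIntegrable g volume a b) :
    (∫ t in a..b, f t * ∫ s in a..t, g s) + (∫ t in a..b, (∫ s in a..t, f s) * g t)
      = (∫ t in a..b, f t) * ∫ t in a..b, g t := by
  have hF := hf.absolutelyContinuousOnInterval_intervalIntegral (c := a) left_mem_uIcc
  have hG := hg.absolutelyContinuousOnInterval_intervalIntegral (c := a) left_mem_uIcc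
  have key := hF.integral_deriv_mul_eq_sub hG
  simp only [integral_same, mul_zero, sub_zero] at key
  rw [← key, ← integral_add (hf.mul_continuousOn hG.continuousOn)
    (hg.continuousOn_mul hF.continuousOn)]
  refine integral_congr_ae ?_
  filter_upwards [hf.ae_hasDerivAt_integral, hg.ae_hasDerivAt_integral] with t hft hgt ht
  have ht' := uIoc_subset_uIcc ht
  rw [(hft ht' a left_mem_uIcc).deriv, (hgt ht' a left_mem_uIcc).deriv, add_comm]

theorem eq_zero_of_forall_le_add_mul_add_sq {c L Q : ℝ}
    (h : ∀ ε : ℝ, c ≤ c + ε * L + ε ^ 2 * Q) : L = 0 := by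
  have hmin : IsLocalMin (fun ε : ℝ => c + ε * L + ε ^ 2 * Q) 0 :=
    Filter.Eventually.of_forall fun ε => by simpa using h ε
  refine hmin.hasDerivAt_eq_zero ?_
  simpa using (((hasDerivAt_id (0:ℝ)).mul_const L).const_add c).fun_add
    ((hasDerivAt_pow 2 (0:ℝ)).mul_const Q)

theorem integral_add_mul_sq {u v : ℝ → ℝ} {a b : ℝ}
    (hu : IntervalIntegrable (fun t => u t ^ 2) volume a b)
    (huv : IntervalIntegrable (fun t => u t * v t) volume a b)
    (hv : IntervalIntegrable (fun t => v t ^ 2) volume a b) (ε : ℝ) :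
    ∫ t in a..b, (u t + ε * v t) ^ 2
      = (∫ t in a..b, u t ^ 2) + 2 * ε * (∫ t in a..b, u t * v t)
        + ε ^ 2 * ∫ t in a..b, v t ^ 2 := by
  have e : (fun t => (u t + ε * v t) ^ 2)
      = fun t => u t ^ 2 + (2 * ε) * (u t * v t) + ε ^ 2 * v t ^ 2 := funext fun t => by ring
  rw [e, integral_add (hu.add (huv.const_mul _)) (hv.const_mul _),
    integral_add hu (huv.const_mul _), intervalIntegral.integral_const_mul,
    intervalIntegral.integral_const_mul]

theorem ae_eq_const_of_forall_integral_mul_eq_zero {F : ℝ → ℝ} {a b : ℝ} (hab : a < b)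
    (hF : MemLp F 2 (volume.restrict (Ι a b)))
    (horth : ∀ h : ℝ → ℝ, MemLp h 2 (volume.restrict (Ι a b)) → ∫ t in a..b, h t = 0 →
      ∫ t in a..b, F t * h t = 0) :
    ∃ c, ∀ᵐ t ∂volume.restrict (Icc a b), F t = c := by
  set c := (∫ t in a..b, F t) / (b - a)
  have hFc : MemLp (fun t => F t - c) 2 (volume.restrict (Ι a b)) := hF.sub (memLp_const c)
  have hFc_int : IntervalIntegrable (fun t => F t - c) volume a b :=
    (memLp_two_restrict_uIoc_iff.1 hFc).1
  have hmean : ∫ t in a..b, (F t - c) = 0 := by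
    rw [integral_sub (memLp_two_restrict_uIoc_iff.1 hF).1 intervalIntegrable_const,
      intervalIntegral.integral_const,
      smul_eq_mul, mul_div_cancel₀ _ (sub_ne_zero.2 hab.ne'), sub_self]
  have hsq : ∫ t in a..b, (F t - c) ^ 2 = 0 := by
    have e : (fun t => (F t - c) ^ 2) = fun t => F t * (F t - c) - c * (F t - c) :=
      funext fun t => by ring
    rw [e, integral_sub (hF.intervalIntegrable_mul hFc) (hFc_int.const_mul c),
      intervalIntegral.integral_const_mul,
      horth _ hFc hmean, hmean, mul_zero, sub_zero]
  have hae := (integral_eq_zero_iff_of_le_of_nonneg_ae hab.le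
    (.of_forall fun t => sq_nonneg (F t - c)) (memLp_two_restrict_uIoc_iff.1 hFc).2).1 hsq
  refine ⟨c, ?_⟩
  rw [Measure.restrict_congr_set Ioc_ae_eq_Icc.symm]
  filter_upwards [hae] with t ht
  simpa [sub_eq_zero] using ht

noncomputable def execGradient (κ φ x : ℝ) (m r : ℝ → ℝ) (t : ℝ) : ℝ :=
  2 * κ * r t + 2 * φ * (∫ s in (0:ℝ)..t, (x - ∫ u in (0:ℝ)..s, r u)) - ∫ s in (0:ℝ)..t, m s

section

variable {κ φ T x : ℝ} {m r h : ℝ → ℝ}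

theorem execAdm_iff :
    execAdm T x r ↔ MemLp r 2 (volume.restrict (Ι 0 T)) ∧ ∫ t in (0:ℝ)..T, r t = x := by
  rw [execAdm, memLp_two_restrict_uIoc_iff, and_assoc]

theorem memLp_execGradient (hm : IntervalIntegrable m volume 0 T)
    (hr : MemLp r 2 (volume.restrict (Ι 0 T))) :
    MemLp (execGradient κ φ x m r) 2 (volume.restrict (Ι 0 T)) := by
  have hrI := (memLp_two_restrict_uIoc_iff.1 hr).1
  have hX : ContinuousOn (fun s => x - ∫ u in (0:ℝ)..s, r u) [[0, T]] :=
    continuousOn_const.sub (continuousOn_primitive_interval' hrI left_mem_uIcc)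
  have hG :=
    continuousOn_primitive_interval' (hX.intervalIntegrable (μ := volume)) left_mem_uIcc
  have hM := continuousOn_primitive_interval' hm left_mem_uIcc
  exact ((hr.const_mul (2 * κ)).add (continuousOn_const.mul hG).memLp_two_restrict_uIoc).sub
    hM.memLp_two_restrict_uIoc

theorem execCost_add_mul (hm : IntervalIntegrable m volume 0 T)
    (hr : MemLp r 2 (volume.restrict (Ι 0 T))) (hh : MemLp h 2 (volume.restrict (Ι 0 T)))
    (hh0 : ∫ t in (0:ℝ)..T, h t = 0) (ε : ℝ) :
    execCost κ φ T x m (fun t => r t + ε * h t)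
      = execCost κ φ T x m r + ε * (∫ t in (0:ℝ)..T, execGradient κ φ x m r t * h t)
        + ε ^ 2 * (κ * (∫ t in (0:ℝ)..T, h t ^ 2)
          + φ * ∫ t in (0:ℝ)..T, (∫ s in (0:ℝ)..t, h s) ^ 2) := by
  obtain ⟨hrI, hr2⟩ := memLp_two_restrict_uIoc_iff.1 hr
  obtain ⟨hhI, hh2⟩ := memLp_two_restrict_uIoc_iff.1 hh
  set X := fun t => x - ∫ s in (0:ℝ)..t, r s
  set G := fun t => ∫ s in (0:ℝ)..t, X s
  set H := fun t => ∫ s in (0:ℝ)..t, h s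
  set M := fun t => ∫ s in (0:ℝ)..t, m s
  have hX : ContinuousOn X [[0, T]] :=
    continuousOn_const.sub (continuousOn_primitive_interval' hrI left_mem_uIcc)
  have hG : ContinuousOn G [[0, T]] :=
    continuousOn_primitive_interval' hX.intervalIntegrable left_mem_uIcc
  have hH : ContinuousOn H [[0, T]] := continuousOn_primitive_interval' hhI left_mem_uIcc
  have hM : ContinuousOn M [[0, T]] := continuousOn_primitive_interval' hm left_mem_uIcc
  have hrh := hr.intervalIntegrable_mul hh
  have hcontrol := integral_add_mul_sq hr2 hrh hh2 ε
  have hinventory : ∫ t in (0:ℝ)..T, (x - ∫ s in (0:ℝ)..t, (r s + ε * h s)) ^ 2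
      = (∫ t in (0:ℝ)..T, X t ^ 2) + 2 * ε * (∫ t in (0:ℝ)..T, X t * -H t)
        + ε ^ 2 * ∫ t in (0:ℝ)..T, (-H t) ^ 2 := by
    rw [← integral_add_mul_sq (u := X) (v := fun t => -H t) (hX.pow 2).intervalIntegrable
      (hX.mul hH.neg).intervalIntegrable (hH.neg.pow 2).intervalIntegrable ε]
    refine integral_congr fun t ht => ?_
    have hsub : [[0, t]] ⊆ [[0, T]] := uIcc_subset_uIcc left_mem_uIcc ht
    simp only [X, H, integral_add (hrI.mono_set hsub) ((hhI.mono_set hsub).const_mul ε),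
      intervalIntegral.integral_const_mul]
    ring
  have hsignal : ∫ t in (0:ℝ)..T, M t * (r t + ε * h t)
      = (∫ t in (0:ℝ)..T, M t * r t) + ε * ∫ t in (0:ℝ)..T, M t * h t := by
    simp only [mul_add, mul_left_comm _ ε]
    rw [integral_add (hrI.continuousOn_mul hM) ((hhI.continuousOn_mul hM).const_mul ε),
      intervalIntegral.integral_const_mul]
  have hgradient : ∫ t in (0:ℝ)..T, execGradient κ φ x m r t * h t
      = 2 * κ * (∫ t in (0:ℝ)..T, r t * h t) + 2 * φ * (∫ t in (0:ℝ)..T, G t * h t)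
        - ∫ t in (0:ℝ)..T, M t * h t := by
    have e : (fun t => execGradient κ φ x m r t * h t)
        = fun t => 2 * κ * (r t * h t) + 2 * φ * (G t * h t) - M t * h t :=
      funext fun t => by rw [execGradient]; ring
    rw [e, integral_sub ((hrh.const_mul _).add ((hhI.continuousOn_mul hG).const_mul _))
        (hhI.continuousOn_mul hM),
      integral_add (hrh.const_mul _) ((hhI.continuousOn_mul hG).const_mul _),
      intervalIntegral.integral_const_mul, intervalIntegral.integral_const_mul]
  have hparts := hX.intervalIntegrable.integral_mul_primitive_add hhI
  rw [hh0, mul_zero] at hparts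
  simp only [execCost, hcontrol, hinventory, hgradient, mul_neg, neg_sq,
    intervalIntegral.integral_neg]
  linear_combination (-2 * φ * ε) * hparts - hsignal

theorem integral_execGradient_mul_eq_zero (hm : IntervalIntegrable m volume 0 T)
    (hr : MemLp r 2 (volume.restrict (Ι 0 T))) (hrx : ∫ t in (0:ℝ)..T, r t = x)
    (hmin : ∀ r' : ℝ → ℝ, execAdm T x r' → execCost κ φ T x m r ≤ execCost κ φ T x m r')
    (hh : MemLp h 2 (volume.restrict (Ι 0 T))) (hh0 : ∫ t in (0:ℝ)..T, h t = 0) :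
    ∫ t in (0:ℝ)..T, execGradient κ φ x m r t * h t = 0 := by
  obtain ⟨hrI, -⟩ := memLp_two_restrict_uIoc_iff.1 hr
  obtain ⟨hhI, -⟩ := memLp_two_restrict_uIoc_iff.1 hh
  have hadm (ε : ℝ) : execAdm T x (fun t => r t + ε * h t) := by
    refine execAdm_iff.2 ⟨hr.add (hh.const_mul ε), ?_⟩
    rw [integral_add hrI (hhI.const_mul ε), intervalIntegral.integral_const_mul, hrx, hh0,
      mul_zero, add_zero]
  exact eq_zero_of_forall_le_add_mul_add_sq fun ε =>
    (hmin _ (hadm ε)).trans_eq (execCost_add_mul hm hr hh hh0 ε)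

end

theorem stmt9_general (κ φ T x : ℝ) (hT : 0 < T)
    (m : ℝ → ℝ) (hm : IntervalIntegrable m volume 0 T)
    (rstar : ℝ → ℝ) (hadm : execAdm T x rstar)
    (hmin : ∀ r : ℝ → ℝ, execAdm T x r →
      execCost κ φ T x m rstar ≤ execCost κ φ T x m r) :
    ∃ lam : ℝ, ∀ᵐ t ∂(volume.restrict (Set.Icc (0:ℝ) T)),
      2 * κ * rstar t
        + 2 * φ * (∫ s in (0:ℝ)..t, (x - ∫ u in (0:ℝ)..s, rstar u))
        - (∫ s in (0:ℝ)..t, m s) = lam := by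
  obtain ⟨hr, hrx⟩ := execAdm_iff.1 hadm
  exact ae_eq_const_of_forall_integral_mul_eq_zero hT (memLp_execGradient hm hr)
    fun h hh hh0 => integral_execGradient_mul_eq_zero hm hr hrx hmin hh hh0

theorem stmt9 (κ φ T x : ℝ) (hκ : 0 < κ) (hφ : 0 < φ) (hT : 0 < T) (hx : 0 < x)
    (m : ℝ → ℝ) (hm : IntervalIntegrable m volume 0 T)
    (rstar : ℝ → ℝ) (hadm : execAdm T x rstar)
    (hmin : ∀ r : ℝ → ℝ, execAdm T x r →
      execCost κ φ T x m rstar ≤ execCost κ φ T x m r) :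
    ∃ lam : ℝ, ∀ᵐ t ∂(volume.restrict (Set.Icc (0:ℝ) T)),
      2 * κ * rstar t
        + 2 * φ * (∫ s in (0:ℝ)..t, (x - ∫ u in (0:ℝ)..s, rstar u))
        - (∫ s in (0:ℝ)..t, m s) = lam :=
  stmt9_general κ φ T x hT m hm rstar hadm hmin
end

section
/- Let v2(t) = sqrt(κφ)·(1 + ζ e^{2β(T-t)})/(1 - ζ e^{2β(T-t)}) with β = sqrt(φ/κ) and ζ = (ϱ + sqrt(κφ))/(ϱ - sqrt(κφ)), ϱ > sqrt(κφ). Then v2(t) < 0 for all t ∈ [0,T], and as ϱ → ∞, v2(t) converges pointwise on [0,T) to v̄2(t) = sqrt(κφ)·(1 + e^{2β(T-t)})/(1 - e^{2β(T-t)}) = -sqrt(κφ)·coth(β(T-t)). -/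
open Filter

theorem stmt19 (κ φ T : ℝ) (hκ : 0 < κ) (hφ : 0 < φ) (hT : 0 < T)
    (β : ℝ) (hβ : β = Real.sqrt (φ / κ))
    (v2 : ℝ → ℝ → ℝ)
    (hv2 : ∀ ϱ t, v2 ϱ t = Real.sqrt (κ * φ) *
        (1 + ((ϱ + Real.sqrt (κ * φ)) / (ϱ - Real.sqrt (κ * φ)))
            * Real.exp (2 * β * (T - t)))
        / (1 - ((ϱ + Real.sqrt (κ * φ)) / (ϱ - Real.sqrt (κ * φ)))
            * Real.exp (2 * β * (T - t)))) :
    (∀ ϱ : ℝ, Real.sqrt (κ * φ) < ϱ → ∀ t ∈ Set.Icc (0:ℝ) T, v2 ϱ t < 0) ∧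
    (∀ t ∈ Set.Ico (0:ℝ) T,
      Tendsto (fun ϱ => v2 ϱ t) atTop
        (nhds (Real.sqrt (κ * φ) * (1 + Real.exp (2 * β * (T - t)))
          / (1 - Real.exp (2 * β * (T - t))))) ∧
      Real.sqrt (κ * φ) * (1 + Real.exp (2 * β * (T - t)))
          / (1 - Real.exp (2 * β * (T - t)))
        = -Real.sqrt (κ * φ) * Real.cosh (β * (T - t)) / Real.sinh (β * (T - t))) := by
  set s := Real.sqrt (κ * φ) with hs
  have hs0 : 0 < s := Real.sqrt_pos.mpr (by positivity)
  have hβ0 : 0 < β := by rw [hβ]; exact Real.sqrt_pos.mpr (by positivity)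
  constructor
  · intro ϱ hϱ t ht
    have hden : 0 < ϱ - s := by linarith
    have hζ : 1 < (ϱ + s) / (ϱ - s) := by
      rw [lt_div_iff₀ hden]; linarith
    have hE : 1 ≤ Real.exp (2 * β * (T - t)) := by
      rw [← Real.exp_zero]
      exact Real.exp_le_exp.mpr (by nlinarith [ht.2, hβ0])
    have hζE : 1 < (ϱ + s) / (ϱ - s) * Real.exp (2 * β * (T - t)) := by
      nlinarith
    rw [hv2]
    apply div_neg_of_pos_of_neg
    · nlinarith
    · linarith
  · intro t ht
    have hx : 0 < β * (T - t) := by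
      have := ht.2; have : 0 < T - t := by linarith [ht.2]
      positivity
    have hE1 : 1 < Real.exp (2 * β * (T - t)) := by
      rw [← Real.exp_zero]
      exact Real.exp_lt_exp.mpr (by nlinarith)
    constructor
    · have hζ : Tendsto (fun ϱ : ℝ => (ϱ + s) / (ϱ - s)) atTop (nhds 1) := by
        have h1 : Tendsto (fun ϱ : ℝ => 1 + 2 * s / (ϱ - s)) atTop (nhds (1 + 0)) := by
          exact tendsto_const_nhds.add
            (Tendsto.div_atTop tendsto_const_nhds
              (tendsto_atTop_add_const_right _ _ tendsto_id))
        rw [show (1:ℝ) = 1 + 0 by ring]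
        refine h1.congr' ?_
        filter_upwards [eventually_gt_atTop s] with ϱ hϱ
        have hd : ϱ - s ≠ 0 := by linarith
        field_simp
        ring
      have hnum : Tendsto (fun ϱ : ℝ => s * (1 + (ϱ + s) / (ϱ - s)
          * Real.exp (2 * β * (T - t)))) atTop
          (nhds (s * (1 + Real.exp (2 * β * (T - t))))) := by
        have h1 : Tendsto (fun ϱ : ℝ => 1 + (ϱ + s) / (ϱ - s)
            * Real.exp (2 * β * (T - t))) atTop
            (nhds (1 + 1 * Real.exp (2 * β * (T - t)))) :=
          tendsto_const_nhds.add (hζ.mul_const _)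
        have h2 := h1.const_mul s
        simpa using h2
      have hden : Tendsto (fun ϱ : ℝ => 1 - (ϱ + s) / (ϱ - s)
          * Real.exp (2 * β * (T - t))) atTop
          (nhds (1 - Real.exp (2 * β * (T - t)))) := by
        have h1 : Tendsto (fun ϱ : ℝ => 1 - (ϱ + s) / (ϱ - s)
            * Real.exp (2 * β * (T - t))) atTop
            (nhds (1 - 1 * Real.exp (2 * β * (T - t)))) :=
          tendsto_const_nhds.sub (hζ.mul_const _)
        simpa using h1
      have hne : 1 - Real.exp (2 * β * (T - t)) ≠ 0 := by linarith
      have := hnum.div hden hne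
      refine this.congr fun ϱ => ?_
      rw [hv2]
      rfl
    · have key : ∀ x : ℝ, 0 < x →
          s * (1 + Real.exp (2 * x)) / (1 - Real.exp (2 * x))
            = -s * Real.cosh x / Real.sinh x := by
        intro x hx0
        have hu1 : 1 < Real.exp x := by
          rw [← Real.exp_zero]; exact Real.exp_lt_exp.mpr hx0
        have h2 : Real.exp (2 * x) = Real.exp x * Real.exp x := by
          rw [← Real.exp_add]; ring_nf
        have hu0 : Real.exp x ≠ 0 := (Real.exp_pos x).ne'
        have hne1 : 1 - Real.exp x * Real.exp x ≠ 0 := by nlinarith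
        have hne2 : Real.exp x - (Real.exp x)⁻¹ ≠ 0 := by
          have h3 : (Real.exp x)⁻¹ < 1 := inv_lt_one_of_one_lt₀ hu1
          intro h; nlinarith
        have hD : (Real.exp x - (Real.exp x)⁻¹) / 2 ≠ 0 :=
          div_ne_zero hne2 two_ne_zero
        rw [Real.cosh_eq, Real.sinh_eq, h2, Real.exp_neg,
          div_eq_div_iff hne1 hD]
        field_simp
        ring
      have harg : 2 * β * (T - t) = 2 * (β * (T - t)) := by ring
      rw [harg]
      exact key _ hx
end
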